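/- Every internal set is sharply closed: if (A_ε) is a net of subsets of ℝ^n (or ℂ), then the internal set [A_ε] := { [x_ε] ∈ ℝ̃_ρ^n : x_ε ∈ A_ε for ε small, for all representatives } is closed in the sharp topology of ℝ̃_ρ^n; moreover [A_ε] = [cl(A_ε)] where cl denotes topological closure in ℝ^n. -/

import Mathlib

open Filter Topology

namespace RC

def F : Filter ℝ := nhdsWithin 0 (Set.Ioi 0)

/-- A gauge: a net `ρ : (0,1] → (0,1]` with `ρ ε → 0` as `ε → 0⁺`. -/
def Gauge (ρ : ℝ → ℝ) : Prop :=
  (∀ ε ∈ Set.Ioc (0:ℝ) 1, ρ ε ∈ Set.Ioc (0:ℝ) 1) ∧ Tendsto ρ F (nhds 0)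

/-- ρ-moderate real nets: `x_ε = O(ρ_ε^{-N})` for some `N`. -/
def Mod (ρ x : ℝ → ℝ) : Prop :=
  ∃ N : ℕ, ∃ C : ℝ, ∀ᶠ ε in F, |x ε| ≤ C * (ρ ε)⁻¹ ^ N

/-- ρ-negligible real nets: `x_ε = O(ρ_ε^{N})` for all `N`. -/
def Ngl (ρ x : ℝ → ℝ) : Prop :=
  ∀ N : ℕ, ∃ C : ℝ, ∀ᶠ ε in F, |x ε| ≤ C * ρ ε ^ N

def Eqv (ρ x y : ℝ → ℝ) : Prop := Ngl ρ (x - y)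

/-- The order on generalized numbers, at the level of representatives. -/
def leG (ρ x y : ℝ → ℝ) : Prop :=
  ∀ x', Mod ρ x' → Eqv ρ x' x → ∃ y', Mod ρ y' ∧ Eqv ρ y' y ∧ ∀ᶠ ε in F, x' ε ≤ y' ε

/-- Invertibility in the quotient ring, at the level of representatives. -/
def InvG (ρ x : ℝ → ℝ) : Prop := ∃ y, Mod ρ y ∧ Eqv ρ (x * y) 1

def ltG (ρ x y : ℝ → ℝ) : Prop := leG ρ x y ∧ InvG ρ (y - x)

def posInv (ρ r : ℝ → ℝ) : Prop := ltG ρ 0 r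

def ModC (ρ : ℝ → ℝ) (x : ℝ → ℂ) : Prop :=
  ∃ N : ℕ, ∃ C : ℝ, ∀ᶠ ε in F, ‖x ε‖ ≤ C * (ρ ε)⁻¹ ^ N

def NglC (ρ : ℝ → ℝ) (x : ℝ → ℂ) : Prop :=
  ∀ N : ℕ, ∃ C : ℝ, ∀ᶠ ε in F, ‖x ε‖ ≤ C * ρ ε ^ N

def EqvC (ρ : ℝ → ℝ) (x y : ℝ → ℂ) : Prop := NglC ρ (x - y)

def InvC (ρ : ℝ → ℝ) (x : ℝ → ℂ) : Prop := ∃ y, ModC ρ y ∧ EqvC ρ (x * y) 1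

noncomputable def absC (x : ℝ → ℂ) : ℝ → ℝ := fun ε => ‖x ε‖

variable {n : ℕ}

def ModV (ρ : ℝ → ℝ) (x : ℝ → EuclideanSpace ℝ (Fin n)) : Prop :=
  ∃ N : ℕ, ∃ C : ℝ, ∀ᶠ ε in F, ‖x ε‖ ≤ C * (ρ ε)⁻¹ ^ N

def NglV (ρ : ℝ → ℝ) (x : ℝ → EuclideanSpace ℝ (Fin n)) : Prop :=
  ∀ N : ℕ, ∃ C : ℝ, ∀ᶠ ε in F, ‖x ε‖ ≤ C * ρ ε ^ N

def EqvV (ρ : ℝ → ℝ) (x y : ℝ → EuclideanSpace ℝ (Fin n)) : Prop := NglV ρ (x - y)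

/-- Membership in the internal set `[A_ε]`. -/
def memInt (ρ : ℝ → ℝ) (A : ℝ → Set (EuclideanSpace ℝ (Fin n)))
    (x : ℝ → EuclideanSpace ℝ (Fin n)) : Prop :=
  ∃ x', ModV ρ x' ∧ EqvV ρ x' x ∧ ∀ᶠ ε in F, x' ε ∈ A ε

/-- Membership in the strongly internal set `⟨A_ε⟩`. -/
def memStr (ρ : ℝ → ℝ) (A : ℝ → Set (EuclideanSpace ℝ (Fin n)))
    (x : ℝ → EuclideanSpace ℝ (Fin n)) : Prop :=
  ∀ x', ModV ρ x' → EqvV ρ x' x → ∀ᶠ ε in F, x' ε ∈ A ε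

/-!
A moderate point `x` lies in `[A_ε]` exactly when its distance `d_ε` to `A_ε` is negligible: one
direction is the triangle inequality, for the other pick points of `A_ε` within
`d_ε + ρ_ε ^ ⌈1/ε⌉` of `x_ε`. If `x ∉ [A_ε]`, then `d_ε > ρ_ε ^ N` for arbitrarily small `ε`, and
since `d` is `1`-Lipschitz in `x_ε` no point of `[A_ε]` is sharply closer to `x` than `ρ ^ N / 2`.
Finally `d` does not change when `A_ε` is replaced by its closure.
-/

section Development

open Metric

variable {ρ : ℝ → ℝ}

lemma eventually_mem_Ioc : ∀ᶠ ε in F, ε ∈ Set.Ioc (0 : ℝ) 1 :=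
  Ioc_mem_nhdsGT one_pos

lemma eventually_le_ceil_inv (N : ℕ) : ∀ᶠ ε in F, N ≤ ⌈ε⁻¹⌉₊ :=
  (tendsto_nat_ceil_atTop.comp tendsto_inv_nhdsGT_zero).eventually_ge_atTop N

lemma Gauge.eventually_pos_le_one (hρ : Gauge ρ) : ∀ᶠ ε in F, 0 < ρ ε ∧ ρ ε ≤ 1 :=
  eventually_mem_Ioc.mono fun ε hε => hρ.1 ε hε

lemma Gauge.eventually_lt (hρ : Gauge ρ) {c : ℝ} (hc : 0 < c) : ∀ᶠ ε in F, ρ ε < c :=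
  hρ.2.eventually (eventually_lt_nhds hc)

lemma mul_inv_pow_le_abs_mul_inv_pow {r : ℝ} (h0 : 0 < r) (h1 : r ≤ 1) (C : ℝ) {N M : ℕ}
    (hNM : N ≤ M) : C * r⁻¹ ^ N ≤ |C| * r⁻¹ ^ M :=
  (mul_le_mul_of_nonneg_right (le_abs_self C) (by positivity)).trans
    (mul_le_mul_of_nonneg_left (pow_le_pow_right₀ ((one_le_inv₀ h0).2 h1) hNM) (abs_nonneg C))

lemma Ngl.of_eventually_eq_zero {f : ℝ → ℝ} (h : ∀ᶠ ε in F, f ε = 0) : Ngl ρ f :=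
  fun _ => ⟨0, h.mono fun ε hε => by simp [hε]⟩

lemma Eqv.refl (x : ℝ → ℝ) : Eqv ρ x x :=
  Ngl.of_eventually_eq_zero (Eventually.of_forall fun ε => sub_self (x ε))

lemma Ngl.add {f g : ℝ → ℝ} (hf : Ngl ρ f) (hg : Ngl ρ g) : Ngl ρ (f + g) := by
  intro N
  obtain ⟨C, hC⟩ := hf N
  obtain ⟨D, hD⟩ := hg N
  refine ⟨C + D, ?_⟩
  filter_upwards [hC, hD] with ε hCε hDε
  calc |f ε + g ε| ≤ |f ε| + |g ε| := abs_add_le _ _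
    _ ≤ (C + D) * ρ ε ^ N := by linarith

lemma Ngl.mono {f g : ℝ → ℝ} (hg : Ngl ρ g) (h : ∀ᶠ ε in F, |f ε| ≤ |g ε|) : Ngl ρ f := by
  intro N
  obtain ⟨C, hC⟩ := hg N
  exact ⟨C, (h.and hC).mono fun ε hε => hε.1.trans hε.2⟩

lemma Ngl.eventually_abs_le (hρ : Gauge ρ) {f : ℝ → ℝ} (hf : Ngl ρ f) (N : ℕ) {c : ℝ}
    (hc : 0 < c) : ∀ᶠ ε in F, |f ε| ≤ c * ρ ε ^ N := by
  obtain ⟨C, hC⟩ := hf (N + 1)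
  have hcC : 0 < c / (|C| + 1) := by positivity
  filter_upwards [hC, hρ.eventually_pos_le_one, hρ.eventually_lt hcC] with ε hCε hpos hsmall
  have hCρ : C * ρ ε ≤ c := by
    calc C * ρ ε ≤ (|C| + 1) * ρ ε := by nlinarith [le_abs_self C]
      _ ≤ (|C| + 1) * (c / (|C| + 1)) := by gcongr
      _ = c := by field_simp
  calc |f ε| ≤ C * ρ ε ^ (N + 1) := hCε
    _ = C * ρ ε * ρ ε ^ N := by ring
    _ ≤ c * ρ ε ^ N := by gcongr; exact pow_nonneg hpos.1.le N

lemma ngl_pow_ceil_inv (hρ : Gauge ρ) : Ngl ρ (fun ε => ρ ε ^ ⌈ε⁻¹⌉₊) := by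
  intro N
  refine ⟨1, ?_⟩
  filter_upwards [hρ.eventually_pos_le_one, eventually_le_ceil_inv N] with ε hρε hN
  rw [one_mul, abs_of_nonneg (pow_nonneg hρε.1.le _)]
  exact pow_le_pow_of_le_one hρε.1.le hρε.2 hN

lemma exists_frequently_pow_lt_of_not_ngl {f : ℝ → ℝ} (hf : ¬ Ngl ρ f) :
    ∃ N : ℕ, ∃ᶠ ε in F, ρ ε ^ N < |f ε| := by
  simp only [Ngl, not_forall, not_exists] at hf
  obtain ⟨N, hN⟩ := hf
  exact ⟨N, (not_eventually.mp (hN 1)).mono fun ε hε => by simpa using hε⟩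

lemma NglV.modV {x : ℝ → EuclideanSpace ℝ (Fin n)} (hx : NglV ρ x) : ModV ρ x := by
  obtain ⟨C, hC⟩ := hx 0
  exact ⟨0, C, hC.mono fun ε hε => by simpa using hε⟩

lemma ModV.of_norm_le_add (hρ : Gauge ρ) {x y z : ℝ → EuclideanSpace ℝ (Fin n)}
    (hx : ModV ρ x) (hy : ModV ρ y) (h : ∀ᶠ ε in F, ‖z ε‖ ≤ ‖x ε‖ + ‖y ε‖) : ModV ρ z := by
  obtain ⟨N, C, hC⟩ := hx
  obtain ⟨M, D, hD⟩ := hy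
  refine ⟨N + M, |C| + |D|, ?_⟩
  filter_upwards [hC, hD, h, hρ.eventually_pos_le_one] with ε hCε hDε hε hρε
  have hC' := mul_inv_pow_le_abs_mul_inv_pow hρε.1 hρε.2 C (Nat.le_add_right N M)
  have hD' := mul_inv_pow_le_abs_mul_inv_pow hρε.1 hρε.2 D (Nat.le_add_left M N)
  linarith

/-- Set to `1` where `A ε` is empty, since there `Metric.infDist` takes the junk value `0`. -/
noncomputable def distNet (x : ℝ → EuclideanSpace ℝ (Fin n))
    (A : ℝ → Set (EuclideanSpace ℝ (Fin n))) (ε : ℝ) : ℝ :=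
  open Classical in if (A ε).Nonempty then infDist (x ε) (A ε) else 1

variable {x y : ℝ → EuclideanSpace ℝ (Fin n)} {A : ℝ → Set (EuclideanSpace ℝ (Fin n))} {ε : ℝ}

lemma distNet_of_nonempty (hA : (A ε).Nonempty) : distNet x A ε = infDist (x ε) (A ε) :=
  if_pos hA

lemma distNet_nonneg : 0 ≤ distNet x A ε := by
  unfold distNet
  split_ifs
  exacts [infDist_nonneg, zero_le_one]

lemma nonempty_of_distNet_lt_one (h : distNet x A ε < 1) : (A ε).Nonempty := by
  by_contra hA
  simp [distNet, hA] at h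

lemma distNet_le_dist_of_mem {z : EuclideanSpace ℝ (Fin n)} (hz : z ∈ A ε) :
    distNet x A ε ≤ dist (x ε) z := by
  rw [distNet_of_nonempty ⟨z, hz⟩]
  exact infDist_le_dist_of_mem hz

lemma distNet_le_norm_sub_add : distNet x A ε ≤ ‖x ε - y ε‖ + distNet y A ε := by
  by_cases hA : (A ε).Nonempty
  · rw [distNet_of_nonempty hA, distNet_of_nonempty hA, ← dist_eq_norm, add_comm]
    exact infDist_le_infDist_add_dist
  · simp [distNet, hA]

lemma distNet_closure : distNet x (fun ε => closure (A ε)) = distNet x A := by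
  funext ε
  by_cases hA : (A ε).Nonempty
  · rw [distNet_of_nonempty hA, distNet_of_nonempty (closure_nonempty_iff.2 hA), infDist_closure]
  · simp [distNet, hA, closure_nonempty_iff]

lemma ngl_distNet_of_memInt (h : memInt ρ A x) : Ngl ρ (distNet x A) := by
  obtain ⟨x', -, hx'x, hx'A⟩ := h
  refine Ngl.mono (g := fun ε => ‖x' ε - x ε‖) (fun N => ?_) ?_
  · simpa using hx'x N
  · filter_upwards [hx'A] with ε hε
    rw [abs_of_nonneg distNet_nonneg, abs_norm, ← dist_eq_norm, dist_comm]
    exact distNet_le_dist_of_mem hε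

/-- The representative of `x` in `[A_ε]` is a near-minimiser of the distance to `A ε`, with an
error `ρ ε ^ ⌈ε⁻¹⌉₊` that is negligible. -/
lemma memInt_of_ngl_distNet (hρ : Gauge ρ) (hx : ModV ρ x) (h : Ngl ρ (distNet x A)) :
    memInt ρ A x := by
  have hA : ∀ᶠ ε in F, (A ε).Nonempty := by
    filter_upwards [h.eventually_abs_le hρ 0 one_half_pos] with ε hε
    refine nonempty_of_distNet_lt_one (x := x) (lt_of_abs_lt ?_)
    linarith
  have hnear : ∀ᶠ ε in F, ∃ z ∈ A ε, dist (x ε) z < distNet x A ε + ρ ε ^ ⌈ε⁻¹⌉₊ := by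
    filter_upwards [hA, hρ.eventually_pos_le_one] with ε hAε hρε
    rw [distNet_of_nonempty hAε, ← infDist_lt_iff hAε]
    exact lt_add_of_pos_right _ (pow_pos hρε.1 _)
  choose! w hwA hwdist using fun ε (hε : ∃ z ∈ A ε, _) => hε
  have hwx : EqvV ρ w x := by
    have hsum := h.add (ngl_pow_ceil_inv hρ)
    intro N
    obtain ⟨C, hC⟩ := hsum N
    refine ⟨C, ?_⟩
    filter_upwards [hC, hnear] with ε hCε hε
    rw [Pi.sub_apply, ← dist_eq_norm, dist_comm]
    exact (hwdist ε hε).le.trans ((le_abs_self _).trans hCε)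
  refine ⟨w, hx.of_norm_le_add hρ hwx.modV ?_, hwx, hnear.mono hwA⟩
  exact Eventually.of_forall fun ε => by
    simpa [add_comm] using norm_add_le (x ε) (w ε - x ε)

lemma memInt_iff_ngl_distNet (hρ : Gauge ρ) (hx : ModV ρ x) :
    memInt ρ A x ↔ Ngl ρ (distNet x A) :=
  ⟨ngl_distNet_of_memInt, memInt_of_ngl_distNet hρ hx⟩

lemma mod_pow_div_two (hρ : Gauge ρ) (N : ℕ) : Mod ρ (fun ε => ρ ε ^ N / 2) := by
  refine ⟨0, 1, ?_⟩
  filter_upwards [hρ.eventually_pos_le_one] with ε hρε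
  have : ρ ε ^ N ≤ 1 := pow_le_one₀ hρε.1.le hρε.2
  rw [abs_of_nonneg (div_nonneg (pow_nonneg hρε.1.le N) zero_le_two)]
  linarith

lemma posInv_pow_div_two (hρ : Gauge ρ) (N : ℕ) : posInv ρ (fun ε => ρ ε ^ N / 2) := by
  refine ⟨fun x' _ hx' => ⟨_, mod_pow_div_two hρ N, Eqv.refl _, ?_⟩,
    ⟨fun ε => 2 * (ρ ε)⁻¹ ^ N, ?_, ?_⟩⟩
  · filter_upwards [hx'.eventually_abs_le hρ N one_half_pos] with ε hε
    have := le_abs_self (x' ε)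
    simp only [Pi.sub_apply, Pi.zero_apply, sub_zero] at hε
    linarith
  · refine ⟨N, 2, ?_⟩
    filter_upwards [hρ.eventually_pos_le_one] with ε hρε
    exact (abs_of_nonneg (mul_nonneg zero_le_two (pow_nonneg (inv_nonneg.2 hρε.1.le) N))).le
  · refine Ngl.of_eventually_eq_zero ?_
    filter_upwards [hρ.eventually_pos_le_one] with ε hρε
    have : ρ ε ≠ 0 := hρε.1.ne'
    simp only [Pi.sub_apply, Pi.mul_apply, Pi.one_apply, sub_zero, inv_pow]
    field_simp
    ring

/-- For `y ∈ [A_ε]` the distance from `x` to `A ε` is at most `‖x - y‖ + (negligible)`, which is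
eventually below `ρ ^ N`. -/
lemma not_memInt_of_ltG_pow_div_two (hρ : Gauge ρ) (hx : ModV ρ x) {N : ℕ}
    (hfar : ∃ᶠ ε in F, ρ ε ^ N < distNet x A ε) (hy : ModV ρ y)
    (hxy : ltG ρ (fun ε => ‖x ε - y ε‖) (fun ε => ρ ε ^ N / 2)) : ¬ memInt ρ A y := by
  intro hyA
  have hmod : Mod ρ (fun ε => ‖x ε - y ε‖) := by
    obtain ⟨M, C, hC⟩ := hx.of_norm_le_add hρ hy
      (Eventually.of_forall fun ε => norm_sub_le (x ε) (y ε))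
    exact ⟨M, C, hC.mono fun ε hε => by simpa using hε⟩
  obtain ⟨v, -, hvr, hxyv⟩ := hxy.1 _ hmod (Eqv.refl _)
  have hsmall := (hvr.add (ngl_distNet_of_memInt hyA)).eventually_abs_le hρ N one_half_pos
  have hnear : ∀ᶠ ε in F, distNet x A ε ≤ ρ ε ^ N := by
    filter_upwards [hsmall, hxyv] with ε hε hxyε
    simp only [Pi.add_apply, Pi.sub_apply] at hε
    linarith [le_abs_self (v ε - ρ ε ^ N / 2 + distNet y A ε),
      distNet_le_norm_sub_add (x := x) (y := y) (A := A) (ε := ε)]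
  exact frequently_false F ((hfar.and_eventually hnear).mono fun ε h => h.1.not_ge h.2)

end Development

/-- Internal sets are sharply closed, and `[A_ε] = [cl(A_ε)]`. -/
theorem internal_sharply_closed (ρ : ℝ → ℝ) (hρ : Gauge ρ) (n : ℕ)
    (A : ℝ → Set (EuclideanSpace ℝ (Fin n))) :
    (∀ x, ModV ρ x → ¬ memInt ρ A x →
      ∃ r : ℝ → ℝ, Mod ρ r ∧ posInv ρ r ∧
        ∀ y, ModV ρ y → ltG ρ (fun ε => ‖x ε - y ε‖) r → ¬ memInt ρ A y) ∧
    (∀ x, ModV ρ x → (memInt ρ A x ↔ memInt ρ (fun ε => closure (A ε)) x)) := by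
  refine ⟨fun x hx hxA => ?_, fun x hx => ?_⟩
  · obtain ⟨N, hfar⟩ :=
      exists_frequently_pow_lt_of_not_ngl (mt (memInt_of_ngl_distNet hρ hx) hxA)
    replace hfar : ∃ᶠ ε in F, ρ ε ^ N < distNet x A ε :=
      hfar.mono fun ε h => by rwa [abs_of_nonneg distNet_nonneg] at h
    exact ⟨_, mod_pow_div_two hρ N, posInv_pow_div_two hρ N,
      fun y hy hxy => not_memInt_of_ltG_pow_div_two hρ hx hfar hy hxy⟩
  · rw [memInt_iff_ngl_distNet hρ hx, memInt_iff_ngl_distNet hρ hx, distNet_closure]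

end RC
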